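/- arXiv:2006.08877 — 4 statements merged into one kernel-verified Lean document; each statement's English description precedes it below -/
import Mathlib

section
/- Let A and H be symmetric positive definite n×n matrices with H = A^{-1}. Let a be a nonzero vector, c > 0, and A⁺ = A + c·aaᵀ. Set s = H a, y = A⁺ s, ρ = 1/(sᵀy). Then the BFGS update H⁺ = (I − ρ s yᵀ) H (I − ρ y sᵀ) + ρ s sᵀ satisfies H⁺ = (A⁺)^{-1}. -/
open Matrix

/-! With `s = H a` we have `A s = a`, so `y = A⁺ s = t a` with `t = 1 + c aᵀHa`, and hence
`H y = t s`. For such pairs the BFGS update collapses to the rank-one correction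
`H - ρ (t - 1) s sᵀ`; since `ρ = 1 / (t aᵀHa)`, this is the Sherman–Morrison formula for
`(A + c a aᵀ)⁻¹`. -/

theorem bfgs_update_eq_sub_of_mulVec_eq_smul {m R : Type*} [Fintype m] [DecidableEq m]
    [CommRing R] {H : Matrix m m R} {s y : m → R} {t ρ : R} (hH : Hᵀ = H)
    (hHy : H *ᵥ y = t • s) (hρ : ρ * (s ⬝ᵥ y) = 1) :
    (1 - ρ • vecMulVec s y) * H * (1 - ρ • vecMulVec y s) + ρ • vecMulVec s s
      = H - (ρ * (t - 1)) • vecMulVec s s := by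
  have hHyy : H * vecMulVec y s = t • vecMulVec s s := by
    rw [mul_vecMulVec, hHy, smul_vecMulVec]
  have hsyH : vecMulVec s y * H = t • vecMulVec s s := by
    rw [vecMulVec_mul, ← hH, vecMul_transpose, hHy, vecMulVec_smul]
  simp only [sub_mul, mul_sub, one_mul, mul_one, smul_mul_assoc, mul_smul_comm, hHyy, hsyH,
    vecMulVec_mul_vecMulVec, vecMulVec_smul, smul_smul]
  match_scalars
  · ring
  · linear_combination (ρ * t) * hρ

theorem inv_add_smul_vecMulVec {m K : Type*} [Fintype m] [DecidableEq m] [Field K]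
    {A : Matrix m m K} (hA : IsUnit A.det) (c : K) (u v : m → K)
    (h : 1 + c * (v ⬝ᵥ A⁻¹ *ᵥ u) ≠ 0) :
    (A + c • vecMulVec u v)⁻¹
      = A⁻¹ - (c / (1 + c * (v ⬝ᵥ A⁻¹ *ᵥ u))) • vecMulVec (A⁻¹ *ᵥ u) (v ᵥ* A⁻¹) := by
  refine inv_eq_left_inv ?_
  rw [sub_mul, mul_add, mul_add, nonsing_inv_mul A hA, mul_smul_comm, mul_vecMulVec,
    smul_mul_assoc, vecMulVec_mul, vecMul_vecMul, nonsing_inv_mul A hA, vecMul_one,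
    smul_mul_assoc, mul_smul_comm, vecMulVec_mul_vecMulVec, vecMulVec_smul,
    ← dotProduct_mulVec]
  match_scalars
  · ring
  · field_simp
    ring

theorem bfgs_hessian_action_inverse_general {n : ℕ} (A H Aplus Hplus : Matrix (Fin n) (Fin n) ℝ)
    (a s y : Fin n → ℝ) (c ρ : ℝ)
    (hA : A.PosDef) (hHA : H = A⁻¹)
    (ha : a ≠ 0) (hc : 0 < c)
    (hAplus : Aplus = A + c • vecMulVec a a)
    (hs : s = H *ᵥ a) (hy : y = Aplus *ᵥ s)
    (hρ : ρ = 1 / (s ⬝ᵥ y))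
    (hHplus : Hplus = (1 - ρ • vecMulVec s y) * H * (1 - ρ • vecMulVec y s)
      + ρ • vecMulVec s s) :
    Hplus = Aplus⁻¹ := by
  have hH : H.PosDef := hHA ▸ hA.inv
  have hHsymm : Hᵀ = H := by simpa using hH.isHermitian.eq
  have hdet : IsUnit A.det := (isUnit_iff_isUnit_det A).mp hA.isUnit
  set σ := a ⬝ᵥ s with hσdef
  have hσ : 0 < σ := by simpa [hσdef, hs] using hH.dotProduct_mulVec_pos ha
  have ht : 0 < 1 + c * σ := by positivity
  have hAs : A *ᵥ s = a := by rw [hs, hHA, mulVec_mulVec, mul_nonsing_inv A hdet, one_mulVec]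
  have hy' : y = (1 + c * σ) • a := by
    rw [hy, hAplus, add_mulVec, hAs, smul_mulVec, vecMulVec_mulVec, op_smul_eq_smul]
    module
  have hHy : H *ᵥ y = (1 + c * σ) • s := by rw [hy', mulVec_smul, ← hs]
  have hsy : s ⬝ᵥ y = (1 + c * σ) * σ := by
    rw [hy', dotProduct_smul, dotProduct_comm, smul_eq_mul]
  have hρsy : ρ * (s ⬝ᵥ y) = 1 := by rw [hρ, hsy]; field_simp
  have hcoef : ρ * (1 + c * σ - 1) = c / (1 + c * σ) := by rw [hρ, hsy]; field_simp; ring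
  have haH : a ᵥ* H = s := by rw [hs, ← vecMul_transpose, hHsymm]
  have hden : 1 + c * (a ⬝ᵥ A⁻¹ *ᵥ a) ≠ 0 := by rw [← hHA, ← hs]; exact ht.ne'
  rw [hHplus, bfgs_update_eq_sub_of_mulVec_eq_smul hHsymm hHy hρsy, hAplus,
    inv_add_smul_vecMulVec hdet c a a hden, ← hHA, ← hs, haH, hcoef]

/-- Hessian-action BFGS: with s = Ha, y = A⁺s for a rank-one update A⁺ = A + c·aaᵀ,
the BFGS update H⁺ = (I − ρsyᵀ)H(I − ρysᵀ) + ρssᵀ equals (A⁺)⁻¹. -/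
theorem bfgs_hessian_action_inverse {n : ℕ} (A H Aplus Hplus : Matrix (Fin n) (Fin n) ℝ)
    (a s y : Fin n → ℝ) (c ρ : ℝ)
    (hA : A.PosDef) (hH : H.PosDef) (hHA : H = A⁻¹)
    (ha : a ≠ 0) (hc : 0 < c)
    (hAplus : Aplus = A + c • vecMulVec a a)
    (hs : s = H *ᵥ a) (hy : y = Aplus *ᵥ s)
    (hρ : ρ = 1 / (s ⬝ᵥ y))
    (hHplus : Hplus = (1 - ρ • vecMulVec s y) * H * (1 - ρ • vecMulVec y s)
      + ρ • vecMulVec s s) :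
    Hplus = Aplus⁻¹ :=
  bfgs_hessian_action_inverse_general A H Aplus Hplus a s y c ρ hA hHA ha hc hAplus hs hy hρ hHplus
end

section
/- Let A be symmetric positive definite with inverse H, a a nonzero vector, c > 0, and A⁺ = A + c·aaᵀ. With s = Ha, y = A⁺s, ρ = 1/(sᵀy), the BFGS update H⁺ = (I − ρ s yᵀ) H (I − ρ y sᵀ) + ρ s sᵀ equals the Sherman–Morrison formula: H⁺ = H − H a (c^{-1} + aᵀ H a)^{-1} aᵀ H. -/
/-!
With `s = H a` and `t = aᵀ H a > 0`, the updated Hessian acts on `s` as `y = A⁺ s = (1 + c t) a`,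
so `H y = (1 + c t) s`. For a symmetric `H` and a `y` with `H y = k s`, the BFGS inverse update
collapses to the rank-one correction `H + ρ (1 - k) s sᵀ`; here `ρ (1 - k) = -c / (1 + c t)`,
which is exactly the Sherman–Morrison coefficient `-(c⁻¹ + t)⁻¹`.
-/

open Matrix

variable {ι R : Type*} [Fintype ι] [DecidableEq ι] [CommRing R]

def bfgsInverseUpdate (H : Matrix ι ι R) (s y : ι → R) (ρ : R) : Matrix ι ι R :=
  (1 - ρ • vecMulVec s y) * H * (1 - ρ • vecMulVec y s) + ρ • vecMulVec s s

theorem bfgsInverseUpdate_eq_of_mulVec_eq_smul {H : Matrix ι ι R} (hH : H.IsSymm)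
    {s y : ι → R} {ρ k : R} (hHy : H *ᵥ y = k • s) (hρ : ρ * (s ⬝ᵥ y) = 1) :
    bfgsInverseUpdate H s y ρ = H + (ρ * (1 - k)) • vecMulVec s s := by
  have hyH : y ᵥ* H = k • s := by rw [← hH.eq, vecMul_transpose, hHy]
  simp only [bfgsInverseUpdate, sub_mul, mul_sub, one_mul, mul_one, smul_mul_assoc,
    mul_smul_comm, vecMulVec_mul, mul_vecMulVec, vecMulVec_mulVec, op_smul_eq_smul, hyH, hHy,
    vecMulVec_smul, smul_vecMulVec, smul_smul]
  linear_combination (norm := module) (ρ * k) • hρ • vecMulVec s s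

theorem add_smul_vecMulVec_mulVec_mulVec_of_mul_eq_one {A H : Matrix ι ι R} (hAH : A * H = 1)
    (c : R) (u v : ι → R) :
    (A + c • vecMulVec u v) *ᵥ (H *ᵥ u) = (1 + c * (v ⬝ᵥ H *ᵥ u)) • u := by
  rw [add_mulVec, mulVec_mulVec, hAH, one_mulVec, smul_mulVec,
    vecMulVec_mulVec, op_smul_eq_smul, smul_smul, add_smul, one_smul]

/-- Hessian-action BFGS update coincides with the Sherman–Morrison formula:
H⁺ = H − Ha (c⁻¹ + aᵀHa)⁻¹ aᵀH. -/
theorem bfgs_eq_sherman_morrison {n : ℕ} (A H Aplus Hplus : Matrix (Fin n) (Fin n) ℝ)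
    (a s y : Fin n → ℝ) (c ρ : ℝ)
    (hA : A.PosDef) (hHA : H = A⁻¹)
    (ha : a ≠ 0) (hc : 0 < c)
    (hAplus : Aplus = A + c • vecMulVec a a)
    (hs : s = H *ᵥ a) (hy : y = Aplus *ᵥ s)
    (hρ : ρ = 1 / (s ⬝ᵥ y))
    (hHplus : Hplus = (1 - ρ • vecMulVec s y) * H * (1 - ρ • vecMulVec y s)
      + ρ • vecMulVec s s) :
    Hplus = H - (c⁻¹ + a ⬝ᵥ (H *ᵥ a))⁻¹ • vecMulVec (H *ᵥ a) (a ᵥ* H) := by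
  have hH : H.PosDef := hHA ▸ hA.inv
  have hHsymm : H.IsSymm := isHermitian_iff_isSymm.mp hH.isHermitian
  have hAH : A * H = 1 := by rw [hHA, mul_nonsing_inv A ((isUnit_iff_isUnit_det A).mp hA.isUnit)]
  set t := a ⬝ᵥ (H *ᵥ a)
  have ht : 0 < t := hH.dotProduct_mulVec_pos ha
  have hyk : y = (1 + c * t) • a := by
    rw [hy, hAplus, hs]
    exact add_smul_vecMulVec_mulVec_mulVec_of_mul_eq_one hAH c a a
  have hsy : s ⬝ᵥ y = (1 + c * t) * t := by
    rw [hyk, dotProduct_smul, smul_eq_mul, dotProduct_comm, hs]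
  have hsy_ne : s ⬝ᵥ y ≠ 0 := by rw [hsy]; positivity
  have hHy : H *ᵥ y = (1 + c * t) • s := by rw [hyk, mulVec_smul, hs]
  have haH : a ᵥ* H = H *ᵥ a := by rw [← hHsymm.eq, vecMul_transpose, hHsymm.eq]
  have hcoeff : ρ * (1 - (1 + c * t)) = -(c⁻¹ + t)⁻¹ := by
    rw [hρ, hsy]
    field_simp
    ring
  rw [hHplus, ← bfgsInverseUpdate,
    bfgsInverseUpdate_eq_of_mulVec_eq_smul hHsymm hHy (by rw [hρ, one_div_mul_cancel hsy_ne]),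
    hcoeff, haH, ← hs, neg_smul, ← sub_eq_add_neg]
end

section
/- Let B be symmetric positive definite with H = B^{-1}, and let s, y be vectors with sᵀy > 0 and yᵀHy / (sᵀy) ≤ 1/μ₁ for some μ₁ > 0. Then the BFGS update B⁺ = B − (B s sᵀ B)/(sᵀ B s) + (y yᵀ)/(sᵀ y) satisfies ‖B⁺‖ ≤ ‖B‖ (1 + 1/μ₁), where ‖·‖ is the spectral norm. -/
open Matrix

noncomputable def specNorm {n : ℕ} (A : Matrix (Fin n) (Fin n) ℝ) : ℝ :=
  ‖Matrix.toEuclideanCLM (𝕜 := ℝ) (n := Fin n) A‖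

/-!
Cauchy–Schwarz for the semi-inner product `⟪u, v⟫ = u ⬝ᵥ B *ᵥ v` says, in the Loewner order,
that `(B v)(B v)ᵀ ≤ (vᵀ B v) • B`. With `v = s` this makes `B - B s sᵀ B / (sᵀ B s)` positive
semidefinite and dominated by `B`; with `v = H y`, where `B v = y`, it gives
`y yᵀ ≤ (yᵀ H y) • B`. Hence `0 ≤ B⁺ ≤ (1 + yᵀ H y / sᵀ y) • B`, and the spectral norm,
being the supremum of the Rayleigh quotient, is monotone on positive operators.
-/

open scoped MatrixOrder ComplexOrder

namespace ContinuousLinearMap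

variable {𝕜 E : Type*} [RCLike 𝕜] [NormedAddCommGroup E] [InnerProductSpace 𝕜 E]

theorem IsPositive.rayleighQuotient_nonneg {T : E →L[𝕜] E} (hT : T.IsPositive) (x : E) :
    0 ≤ T.rayleighQuotient x :=
  div_nonneg (hT.re_inner_nonneg_left x) (by positivity)

theorem norm_le_norm_of_nonneg_of_le {T S : E →L[𝕜] E} (hT : 0 ≤ T) (hTS : T ≤ S) :
    ‖T‖ ≤ ‖S‖ := by
  rw [nonneg_iff_isPositive] at hT
  rw [T.norm_eq_iSup_rayleighQuotient hT.isSymmetric]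
  refine ciSup_le fun x => ?_
  calc |T.rayleighQuotient x| = T.rayleighQuotient x :=
        abs_of_nonneg (hT.rayleighQuotient_nonneg x)
    _ ≤ T.rayleighQuotient x + (S - T).rayleighQuotient x :=
        le_add_of_nonneg_right (IsPositive.rayleighQuotient_nonneg hTS x)
    _ = S.rayleighQuotient x := by rw [← rayleighQuotient_add, add_sub_cancel]
    _ ≤ ‖S‖ := (le_abs_self _).trans (S.rayleighQuotient_le_norm x)

end ContinuousLinearMap

namespace Matrix

section toEuclideanCLM

variable {𝕜 n : Type*} [RCLike 𝕜] [Fintype n] [DecidableEq n]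

theorem isPositive_toEuclideanCLM_iff {A : Matrix n n 𝕜} :
    (toEuclideanCLM (𝕜 := 𝕜) A).IsPositive ↔ A.PosSemidef := by
  rw [← ContinuousLinearMap.isPositive_toLinearMap_iff, coe_toEuclideanCLM_eq_toEuclideanLin,
    isPositive_toEuclideanLin_iff]

theorem toEuclideanCLM_le_toEuclideanCLM_iff {A C : Matrix n n 𝕜} :
    toEuclideanCLM (𝕜 := 𝕜) A ≤ toEuclideanCLM (𝕜 := 𝕜) C ↔ A ≤ C := by
  rw [ContinuousLinearMap.le_def, ← map_sub, isPositive_toEuclideanCLM_iff, le_iff]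

theorem norm_toEuclideanCLM_le_of_nonneg_of_le {A C : Matrix n n 𝕜} (hA : 0 ≤ A)
    (hAC : A ≤ C) : ‖toEuclideanCLM (𝕜 := 𝕜) A‖ ≤ ‖toEuclideanCLM (𝕜 := 𝕜) C‖ := by
  refine ContinuousLinearMap.norm_le_norm_of_nonneg_of_le ?_
    (toEuclideanCLM_le_toEuclideanCLM_iff.mpr hAC)
  rw [← map_zero (toEuclideanCLM (n := n) (𝕜 := 𝕜))]
  exact toEuclideanCLM_le_toEuclideanCLM_iff.mpr hA

end toEuclideanCLM

variable {n : Type*} [Fintype n]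

theorem PosSemidef.vecMul_eq_mulVec {B : Matrix n n ℝ} (hB : B.PosSemidef) (v : n → ℝ) :
    v ᵥ* B = B *ᵥ v := by
  rw [← mulVec_transpose, ← conjTranspose_eq_transpose_of_trivial, hB.isHermitian.eq]

theorem PosSemidef.dotProduct_mulVec_sq_le {B : Matrix n n ℝ} (hB : B.PosSemidef)
    (u v : n → ℝ) : (u ⬝ᵥ B *ᵥ v) ^ 2 ≤ (u ⬝ᵥ B *ᵥ u) * (v ⬝ᵥ B *ᵥ v) := by
  let _ := B.toSeminormedAddCommGroup hB
  let _ := B.toInnerProductSpace hB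
  have hinner (x y : n → ℝ) : inner ℝ x y = x ⬝ᵥ B *ᵥ y := by rw [dotProduct_comm]; rfl
  simpa only [hinner, sq] using real_inner_mul_inner_self_le u v

theorem PosSemidef.vecMulVec_mulVec_le {B : Matrix n n ℝ} (hB : B.PosSemidef) (v : n → ℝ) :
    vecMulVec (B *ᵥ v) (B *ᵥ v) ≤ (v ⬝ᵥ B *ᵥ v) • B := by
  have hrank : (vecMulVec (B *ᵥ v) (B *ᵥ v)).PosSemidef := posSemidef_vecMulVec_self_star _
  refine le_iff.mpr <| PosSemidef.of_dotProduct_mulVec_nonneg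
    ((hB.isHermitian.smul (.all _)).sub hrank.isHermitian) fun x => ?_
  have hBv : (B *ᵥ v) ⬝ᵥ x = v ⬝ᵥ B *ᵥ x := by
    rw [dotProduct_mulVec, hB.vecMul_eq_mulVec, dotProduct_comm]
  simp only [star_trivial, sub_mulVec, smul_mulVec, vecMulVec_mulVec, dotProduct_sub,
    dotProduct_smul, dotProduct_comm x (B *ᵥ v), hBv, op_smul_eq_mul, smul_eq_mul, sub_nonneg]
  rw [← sq]
  linarith [hB.dotProduct_mulVec_sq_le v x]

theorem PosSemidef.smul_vecMulVec_mulVec_le {B : Matrix n n ℝ} (hB : B.PosSemidef)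
    (s : n → ℝ) : (1 / (s ⬝ᵥ B *ᵥ s)) • vecMulVec (B *ᵥ s) (B *ᵥ s) ≤ B := by
  have hσ : 0 ≤ s ⬝ᵥ B *ᵥ s := by simpa using hB.dotProduct_mulVec_nonneg s
  obtain hσ | hσ := hσ.eq_or_lt
  · simpa [← hσ] using hB.nonneg
  · calc (1 / (s ⬝ᵥ B *ᵥ s)) • vecMulVec (B *ᵥ s) (B *ᵥ s)
        ≤ (1 / (s ⬝ᵥ B *ᵥ s)) • ((s ⬝ᵥ B *ᵥ s) • B) :=
          smul_le_smul_of_nonneg_left (hB.vecMulVec_mulVec_le s) (by positivity)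
      _ = B := by rw [smul_smul, one_div_mul_cancel hσ.ne', one_smul]

end Matrix

section BFGS

variable {n : Type*} [Fintype n]

noncomputable def bfgsUpdate (B : Matrix n n ℝ) (s y : n → ℝ) : Matrix n n ℝ :=
  B - (1 / (s ⬝ᵥ (B *ᵥ s))) • vecMulVec (B *ᵥ s) (s ᵥ* B) + (1 / (s ⬝ᵥ y)) • vecMulVec y y

theorem bfgsUpdate_nonneg {B : Matrix n n ℝ} (hB : B.PosSemidef) {s y : n → ℝ}
    (hsy : 0 ≤ s ⬝ᵥ y) : 0 ≤ bfgsUpdate B s y := by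
  rw [bfgsUpdate, hB.vecMul_eq_mulVec]
  refine add_nonneg (sub_nonneg.mpr (hB.smul_vecMulVec_mulVec_le s)) ?_
  exact smul_nonneg (by positivity) (posSemidef_vecMulVec_self_star y).nonneg

theorem bfgsUpdate_le [DecidableEq n] {B : Matrix n n ℝ} (hB : B.PosDef) {s y : n → ℝ}
    (hsy : 0 ≤ s ⬝ᵥ y) : bfgsUpdate B s y ≤ (1 + y ⬝ᵥ (B⁻¹ *ᵥ y) / (s ⬝ᵥ y)) • B := by
  have hBBinv : B *ᵥ (B⁻¹ *ᵥ y) = y := by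
    rw [mulVec_mulVec, mul_nonsing_inv _ (isUnit_iff_isUnit_det _ |>.mp hB.isUnit), one_mulVec]
  have hrank : vecMulVec y y ≤ (y ⬝ᵥ B⁻¹ *ᵥ y) • B := by
    simpa only [hBBinv, dotProduct_comm] using hB.posSemidef.vecMulVec_mulVec_le (B⁻¹ *ᵥ y)
  have hσ : 0 ≤ 1 / (s ⬝ᵥ (B *ᵥ s)) := by
    simpa using hB.posSemidef.dotProduct_mulVec_nonneg s
  rw [bfgsUpdate, hB.posSemidef.vecMul_eq_mulVec, add_smul, one_smul]
  refine add_le_add (sub_le_self _ ?_) ?_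
  · exact smul_nonneg hσ (posSemidef_vecMulVec_self_star (B *ᵥ s)).nonneg
  · simpa only [smul_smul, one_div_mul_eq_div] using
      smul_le_smul_of_nonneg_left hrank (one_div_nonneg.mpr hsy)

end BFGS

theorem specNorm_smul {n : ℕ} (c : ℝ) (A : Matrix (Fin n) (Fin n) ℝ) :
    specNorm (c • A) = |c| * specNorm A := by
  simp only [specNorm, map_smul, norm_smul, Real.norm_eq_abs]

theorem bfgs_B_norm_bound_general {n : ℕ} (B H Bplus : Matrix (Fin n) (Fin n) ℝ)
    (s y : Fin n → ℝ) (μ₁ : ℝ)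
    (hB : B.PosDef) (hHB : H = B⁻¹)
    (hsy : 0 < s ⬝ᵥ y)
    (hcurv : y ⬝ᵥ (H *ᵥ y) / (s ⬝ᵥ y) ≤ 1 / μ₁)
    (hBplus : Bplus = B - (1 / (s ⬝ᵥ (B *ᵥ s))) • vecMulVec (B *ᵥ s) (s ᵥ* B)
      + (1 / (s ⬝ᵥ y)) • vecMulVec y y) :
    specNorm Bplus ≤ specNorm B * (1 + 1 / μ₁) := by
  subst hHB hBplus
  set κ := y ⬝ᵥ (B⁻¹ *ᵥ y) / (s ⬝ᵥ y)
  have hκ : 0 ≤ κ :=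
    div_nonneg (by simpa using hB.posSemidef.inv.dotProduct_mulVec_nonneg y) hsy.le
  calc specNorm (bfgsUpdate B s y)
      ≤ specNorm ((1 + κ) • B) :=
        norm_toEuclideanCLM_le_of_nonneg_of_le (bfgsUpdate_nonneg hB.posSemidef hsy.le)
          (bfgsUpdate_le hB hsy.le)
    _ = (1 + κ) * specNorm B := by rw [specNorm_smul, abs_of_nonneg (by positivity)]
    _ ≤ (1 + 1 / μ₁) * specNorm B := by gcongr; exact norm_nonneg _
    _ = specNorm B * (1 + 1 / μ₁) := mul_comm _ _

/-- Spectral-norm growth bound for the BFGS update of B under the curvature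
condition yᵀHy/(sᵀy) ≤ 1/μ₁. -/
theorem bfgs_B_norm_bound {n : ℕ} (B H Bplus : Matrix (Fin n) (Fin n) ℝ)
    (s y : Fin n → ℝ) (μ₁ : ℝ)
    (hB : B.PosDef) (hHB : H = B⁻¹)
    (hμ₁ : 0 < μ₁)
    (hsy : 0 < s ⬝ᵥ y)
    (hcurv : y ⬝ᵥ (H *ᵥ y) / (s ⬝ᵥ y) ≤ 1 / μ₁)
    (hBplus : Bplus = B - (1 / (s ⬝ᵥ (B *ᵥ s))) • vecMulVec (B *ᵥ s) (s ᵥ* B)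
      + (1 / (s ⬝ᵥ y)) • vecMulVec y y) :
    specNorm Bplus ≤ specNorm B * (1 + 1 / μ₁) :=
  bfgs_B_norm_bound_general B H Bplus s y μ₁ hB hHB hsy hcurv hBplus
end

section
/- Let H be symmetric positive definite with ‖H‖ ≤ h, and s, y vectors with sᵀy > 0, sᵀs/(sᵀy) ≤ 1/μ₂, and yᵀy/(sᵀy) ≤ 1/(μ₁κ̲). Then the BFGS inverse update H⁺ = (I − ρsyᵀ)H(I − ρysᵀ) + ρssᵀ with ρ = 1/(sᵀy) satisfies ‖H⁺‖ ≤ (1 + 1/√(μ₁μ₂κ̲))² h + 1/μ₂. -/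
/-!
`specNorm` is the L2 operator norm on matrices, so `Hplus = (1 - P) H (1 - Q) + R` is bounded by
`‖1 - P‖ ‖H‖ ‖1 - Q‖ + ‖R‖` with `P = ρ s yᵀ`, `Q = ρ y sᵀ` and `R = ρ s sᵀ` of rank one. The norm
of a rank-one matrix `a bᵀ` is `‖a‖ ‖b‖`, so `‖R‖ = ρ ‖s‖² ≤ 1/μ₂`, and
`‖P‖ = ‖Q‖ = √(ρ ‖s‖² · ρ ‖y‖²) ≤ 1/√(μ₁ μ₂ κ)`.
-/

open Matrix

open scoped Matrix.Norms.L2Operator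

theorem specNorm_eq_l2_opNorm {n : ℕ} (A : Matrix (Fin n) (Fin n) ℝ) : specNorm A = ‖A‖ := rfl

theorem EuclideanSpace.norm_toLp_sq {m : Type*} [Fintype m] (a : m → ℝ) :
    ‖WithLp.toLp 2 a‖ ^ 2 = a ⬝ᵥ a := by
  rw [← real_inner_self_eq_norm_sq, EuclideanSpace.inner_toLp_toLp, star_trivial]

namespace Matrix

variable {m n : Type*} [Fintype m] [Fintype n] [DecidableEq n]

theorem l2_opNorm_vecMulVec (a : m → ℝ) (b : n → ℝ) :
    ‖vecMulVec a b‖ = ‖WithLp.toLp 2 a‖ * ‖WithLp.toLp 2 b‖ := by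
  have h := InnerProductSpace.symm_toEuclideanLin_rankOne (𝕜 := ℝ) (WithLp.toLp 2 a)
    (WithLp.toLp 2 b)
  rw [star_trivial] at h
  rw [← h, l2_opNorm_def, LinearEquiv.trans_apply, LinearEquiv.apply_symm_apply]
  exact InnerProductSpace.norm_rankOne _ _

theorem l2_opNorm_vecMulVec_self (a : n → ℝ) : ‖vecMulVec a a‖ = a ⬝ᵥ a := by
  rw [l2_opNorm_vecMulVec, ← sq, EuclideanSpace.norm_toLp_sq]

theorem l2_opNorm_smul_vecMulVec_le {ρ c d : ℝ} (hρ : 0 ≤ ρ) {a : m → ℝ} {b : n → ℝ}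
    (ha : ρ * (a ⬝ᵥ a) ≤ c) (hb : ρ * (b ⬝ᵥ b) ≤ d) :
    ‖ρ • vecMulVec a b‖ ≤ √(c * d) := by
  have hρa : 0 ≤ ρ * (a ⬝ᵥ a) := by rw [← EuclideanSpace.norm_toLp_sq]; positivity
  have hρb : 0 ≤ ρ * (b ⬝ᵥ b) := by rw [← EuclideanSpace.norm_toLp_sq]; positivity
  have hsq : ‖ρ • vecMulVec a b‖ ^ 2 = ρ * (a ⬝ᵥ a) * (ρ * (b ⬝ᵥ b)) := by
    rw [norm_smul, l2_opNorm_vecMulVec, ← EuclideanSpace.norm_toLp_sq,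
      ← EuclideanSpace.norm_toLp_sq, Real.norm_eq_abs, abs_of_nonneg hρ]
    ring
  refine Real.le_sqrt_of_sq_le ?_
  rw [hsq]
  exact mul_le_mul ha hb hρb (hρa.trans ha)

theorem l2_opNorm_one_le : ‖(1 : Matrix n n ℝ)‖ ≤ 1 := by
  rw [cstar_norm_def, map_one]
  exact ContinuousLinearMap.norm_id_le

end Matrix

theorem norm_one_sub_mul_mul_one_sub_add_le {A : Type*} [NormedRing A] (h₁ : ‖(1 : A)‖ ≤ 1)
    {P H Q R : A} {α h β : ℝ} (hP : ‖P‖ ≤ α) (hH : ‖H‖ ≤ h) (hQ : ‖Q‖ ≤ α) (hR : ‖R‖ ≤ β) :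
    ‖(1 - P) * H * (1 - Q) + R‖ ≤ (1 + α) ^ 2 * h + β := by
  have hP' : ‖1 - P‖ ≤ 1 + α := (norm_sub_le _ _).trans (add_le_add h₁ hP)
  have hQ' : ‖1 - Q‖ ≤ 1 + α := (norm_sub_le _ _).trans (add_le_add h₁ hQ)
  calc ‖(1 - P) * H * (1 - Q) + R‖ ≤ ‖1 - P‖ * ‖H‖ * ‖1 - Q‖ + ‖R‖ :=
        (norm_add_le _ _).trans (add_le_add_left norm_mul₃_le _)
    _ ≤ (1 + α) * h * (1 + α) + β := by
        have := (norm_nonneg _).trans hP'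
        have := (norm_nonneg _).trans hH
        gcongr
    _ = (1 + α) ^ 2 * h + β := by ring

theorem lbfgs_H_step_bound_general {n : ℕ} (H Hplus : Matrix (Fin n) (Fin n) ℝ)
    (s y : Fin n → ℝ) (h μ₁ μ₂ κ ρ : ℝ)
    (hHnorm : specNorm H ≤ h)
    (hsy : 0 < s ⬝ᵥ y)
    (hss : (s ⬝ᵥ s) / (s ⬝ᵥ y) ≤ 1 / μ₂)
    (hyy : (y ⬝ᵥ y) / (s ⬝ᵥ y) ≤ 1 / (μ₁ * κ))
    (hρ : ρ = 1 / (s ⬝ᵥ y))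
    (hHplus : Hplus = (1 - ρ • vecMulVec s y) * H * (1 - ρ • vecMulVec y s)
      + ρ • vecMulVec s s) :
    specNorm Hplus ≤ (1 + 1 / Real.sqrt (μ₁ * μ₂ * κ)) ^ 2 * h + 1 / μ₂ := by
  have hρ₀ : 0 ≤ ρ := by rw [hρ]; positivity
  have hρs : ρ * (s ⬝ᵥ s) ≤ 1 / μ₂ := by rwa [hρ, one_div_mul_eq_div]
  have hρy : ρ * (y ⬝ᵥ y) ≤ 1 / (μ₁ * κ) := by rwa [hρ, one_div_mul_eq_div]
  have hα : √(1 / μ₂ * (1 / (μ₁ * κ))) = 1 / √(μ₁ * μ₂ * κ) := by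
    rw [show 1 / μ₂ * (1 / (μ₁ * κ)) = (μ₁ * μ₂ * κ)⁻¹ by ring, Real.sqrt_inv, one_div]
  rw [specNorm_eq_l2_opNorm] at hHnorm ⊢
  rw [hHplus]
  refine norm_one_sub_mul_mul_one_sub_add_le l2_opNorm_one_le ?_ hHnorm ?_ ?_
  · rw [← hα]
    exact l2_opNorm_smul_vecMulVec_le hρ₀ hρs hρy
  · rw [← hα, mul_comm]
    exact l2_opNorm_smul_vecMulVec_le hρ₀ hρy hρs
  · rw [norm_smul, l2_opNorm_vecMulVec_self, Real.norm_eq_abs, abs_of_nonneg hρ₀]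
    exact hρs

/-- One-step spectral-norm growth bound for the BFGS inverse update under the
skipped-double-damping conditions. -/
theorem lbfgs_H_step_bound {n : ℕ} (H Hplus : Matrix (Fin n) (Fin n) ℝ)
    (s y : Fin n → ℝ) (h μ₁ μ₂ κ ρ : ℝ)
    (hH : H.PosDef) (hHnorm : specNorm H ≤ h)
    (hμ₁ : 0 < μ₁) (hμ₂ : 0 < μ₂) (hκ : 0 < κ)
    (hsy : 0 < s ⬝ᵥ y)
    (hss : (s ⬝ᵥ s) / (s ⬝ᵥ y) ≤ 1 / μ₂)
    (hyy : (y ⬝ᵥ y) / (s ⬝ᵥ y) ≤ 1 / (μ₁ * κ))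
    (hρ : ρ = 1 / (s ⬝ᵥ y))
    (hHplus : Hplus = (1 - ρ • vecMulVec s y) * H * (1 - ρ • vecMulVec y s)
      + ρ • vecMulVec s s) :
    specNorm Hplus ≤ (1 + 1 / Real.sqrt (μ₁ * μ₂ * κ)) ^ 2 * h + 1 / μ₂ :=
  lbfgs_H_step_bound_general H Hplus s y h μ₁ μ₂ κ ρ hHnorm hsy hss hyy hρ hHplus
end
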